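/- Suppose constants G^{αβγ} (α,β,γ ∈ {0,1,2,3}) satisfy the null condition G^{αβγ}X_α X_β X_γ = 0 for all X ∈ ℝ⁴ with X_0² = X_1²+X_2²+X_3². Then there is C > 0 such that for all smooth w₁, w₂ on ℝ×(ℝ³∖{0}), |G^{αβγ}(∂_γ w₁)(∂²_{αβ} w₂)| ≤ C(|Tw₁||∂²w₂| + |∂w₁||T∂w₂|) pointwise, with summation over repeated indices. -/

import Mathlib

noncomputable section

set_option maxHeartbeats 1000000

/-- Points of spacetime ℝ×ℝ³, coordinate 0 is time. -/
abbrev Pt := Fin 4 → ℝ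

/-- Partial derivative ∂_α. -/
def pd (α : Fin 4) (u : Pt → ℝ) : Pt → ℝ :=
  fun p => fderiv ℝ u p (Pi.single α 1)

/-- Scaling operator S = t∂_t + x·∇. -/
def Sop (u : Pt → ℝ) : Pt → ℝ :=
  fun p => p 0 * pd 0 u p + (p 1 * pd 1 u p + p 2 * pd 2 u p + p 3 * pd 3 u p)

/-- d'Alembertian □ = ∂_t² − Δ. -/
def Box (u : Pt → ℝ) : Pt → ℝ :=
  fun p => pd 0 (pd 0 u) p - (pd 1 (pd 1 u) p + pd 2 (pd 2 u) p + pd 3 (pd 3 u) p)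

/-- Rotation operator Ω_{ij} = x_i∂_j − x_j∂_i. -/
def Om (i j : Fin 4) (u : Pt → ℝ) : Pt → ℝ :=
  fun p => p i * pd j u p - p j * pd i u p

/-- r = |x| : Euclidean norm of the spatial part. -/
def rad (p : Pt) : ℝ := Real.sqrt ((p 1) ^ 2 + (p 2) ^ 2 + (p 3) ^ 2)

/-- Good derivative T_k = ∂_k + (x_k/|x|)∂_t. -/
def Tgood (k : Fin 4) (u : Pt → ℝ) : Pt → ℝ :=
  fun p => pd k u p + (p k / rad p) * pd 0 u p

/-- Kronecker delta. -/
def kdelta (a b : Fin 4) : ℝ := if a = b then 1 else 0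

/-- Null condition for cubic coefficients G^{αβγ}. -/
def NullG (G : Fin 4 → Fin 4 → Fin 4 → ℝ) : Prop :=
  ∀ X : Fin 4 → ℝ, (X 0) ^ 2 = (X 1) ^ 2 + (X 2) ^ 2 + (X 3) ^ 2 →
    ∑ α : Fin 4, ∑ β : Fin 4, ∑ γ : Fin 4, G α β γ * X α * X β * X γ = 0

/-- |∂w| = (Σ_α |∂_α w|²)^{1/2}. -/
def Dnorm (v : Pt → ℝ) (p : Pt) : ℝ := Real.sqrt (∑ α : Fin 4, (pd α v p) ^ 2)

/-- |Tw| = (Σ_{k=1}^3 |T_k w|²)^{1/2}. -/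
def Tnorm (v : Pt → ℝ) (p : Pt) : ℝ :=
  Real.sqrt ((Tgood 1 v p) ^ 2 + (Tgood 2 v p) ^ 2 + (Tgood 3 v p) ^ 2)

/-- |∂²w| = (Σ_{α,β} |∂²_{αβ} w|²)^{1/2}. -/
def D2norm (w : Pt → ℝ) (p : Pt) : ℝ :=
  Real.sqrt (∑ α : Fin 4, ∑ β : Fin 4, (pd α (pd β w) p) ^ 2)

/-- |T∂w| = (Σ_{k,γ} |T_k ∂_γ w|²)^{1/2}. -/
def TDnorm (w : Pt → ℝ) (p : Pt) : ℝ :=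
  Real.sqrt (∑ γ : Fin 4,
    ((Tgood 1 (pd γ w) p) ^ 2 + (Tgood 2 (pd γ w) p) ^ 2 + (Tgood 3 (pd γ w) p) ^ 2))


/-- helper: `|x| ≤ √s` when `x² ≤ s`. -/
lemma abs_le_sqrt_of_sq_le' {x s : ℝ} (h : x ^ 2 ≤ s) : |x| ≤ Real.sqrt s := by
  rw [← Real.sqrt_sq_eq_abs]; exact Real.sqrt_le_sqrt h

lemma pd_pd_eq_second (w : Pt → ℝ) (hw : ContDiff ℝ (⊤ : ℕ∞) w) (α β : Fin 4) (p : Pt) :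
    pd α (pd β w) p = fderiv ℝ (fderiv ℝ w) p (Pi.single α 1) (Pi.single β 1) := by
  have hd : DifferentiableAt ℝ (fderiv ℝ w) p :=
    ((hw.fderiv_right (m := 1) (WithTop.coe_le_coe.mpr le_top)).differentiable one_ne_zero) p
  have h2 := hd.hasFDerivAt.clm_apply (hasFDerivAt_const (Pi.single β 1 : Pt) p)
  show fderiv ℝ (fun q => fderiv ℝ w q (Pi.single β 1)) p (Pi.single α 1) = _
  rw [h2.fderiv]
  simp

lemma pd_comm (w : Pt → ℝ) (hw : ContDiff ℝ (⊤ : ℕ∞) w) (α β : Fin 4) (p : Pt) :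
    pd α (pd β w) p = pd β (pd α w) p := by
  rw [pd_pd_eq_second w hw, pd_pd_eq_second w hw]
  exact (hw.contDiffAt.isSymmSndFDerivAt (by rw [minSmoothness_of_isRCLikeNormedField]; exact WithTop.coe_le_coe.mpr le_top)).eq _ _

/-- Null-form estimate |G^{αβγ}(∂_γ w₁)(∂²_{αβ} w₂)| ≤ C(|Tw₁||∂²w₂| + |∂w₁||T∂w₂|). -/
theorem null_form_estimate_G (G : Fin 4 → Fin 4 → Fin 4 → ℝ) (hG : NullG G) :
    ∃ C > 0, ∀ w₁ w₂ : Pt → ℝ, ContDiff ℝ (⊤ : ℕ∞) w₁ → ContDiff ℝ (⊤ : ℕ∞) w₂ →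
      ∀ p : Pt, rad p ≠ 0 →
        |∑ α : Fin 4, ∑ β : Fin 4, ∑ γ : Fin 4,
            G α β γ * pd γ w₁ p * pd α (pd β w₂) p|
          ≤ C * (Tnorm w₁ p * D2norm w₂ p + Dnorm w₁ p * TDnorm w₂ p) := by
  classical
  set K := ∑ α : Fin 4, ∑ β : Fin 4, ∑ γ : Fin 4, |G α β γ| with hK
  have hK0 : 0 ≤ K := by positivity
  refine ⟨2 * K + 1, by linarith, ?_⟩
  intro w₁ w₂ h1 h2 p hr
  have hr0 : 0 ≤ rad p := Real.sqrt_nonneg _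
  have hrpos : 0 < rad p := lt_of_le_of_ne hr0 (Ne.symm hr)
  have hr2 : rad p ^ 2 = p 1 ^ 2 + p 2 ^ 2 + p 3 ^ 2 := Real.sq_sqrt (by positivity)
  set ω : Fin 4 → ℝ := fun γ => if γ = 0 then 1 else -(p γ / rad p) with hω
  set t : Fin 4 → (Pt → ℝ) → ℝ := fun γ u => if γ = 0 then 0 else Tgood γ u p with htdef
  have hdec : ∀ (u : Pt → ℝ) (γ : Fin 4), pd γ u p = t γ u + ω γ * pd 0 u p := by
    intro u γ
    by_cases hγ : γ = 0
    · subst hγ; simp [htdef, hω]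
    · simp only [htdef, hω, if_neg hγ, Tgood]
      ring
  have hdec2 : ∀ α β : Fin 4, pd α (pd β w₂) p
      = t α (pd β w₂) + ω α * (t β (pd 0 w₂) + ω β * pd 0 (pd 0 w₂) p) := by
    intro α β
    rw [hdec (pd β w₂) α, pd_comm w₂ h2 0 β, hdec (pd 0 w₂) β]
  have key : ∀ α β γ : Fin 4,
      G α β γ * pd γ w₁ p * pd α (pd β w₂) p
        = G α β γ * t γ w₁ * pd α (pd β w₂) p
          + G α β γ * (ω γ * pd 0 w₁ p) * t α (pd β w₂)
          + G α β γ * (ω γ * pd 0 w₁ p) * (ω α * t β (pd 0 w₂))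
          + G α β γ * ω α * ω β * ω γ * (pd 0 w₁ p * pd 0 (pd 0 w₂) p) := by
    intro α β γ
    rw [hdec w₁ γ, hdec2 α β]
    ring
  have sum_eq :
      (∑ α : Fin 4, ∑ β : Fin 4, ∑ γ : Fin 4,
          G α β γ * pd γ w₁ p * pd α (pd β w₂) p)
      = (∑ α : Fin 4, ∑ β : Fin 4, ∑ γ : Fin 4,
            G α β γ * t γ w₁ * pd α (pd β w₂) p)
        + (∑ α : Fin 4, ∑ β : Fin 4, ∑ γ : Fin 4,
            G α β γ * (ω γ * pd 0 w₁ p) * t α (pd β w₂))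
        + (∑ α : Fin 4, ∑ β : Fin 4, ∑ γ : Fin 4,
            G α β γ * (ω γ * pd 0 w₁ p) * (ω α * t β (pd 0 w₂)))
        + (∑ α : Fin 4, ∑ β : Fin 4, ∑ γ : Fin 4,
            G α β γ * ω α * ω β * ω γ * (pd 0 w₁ p * pd 0 (pd 0 w₂) p)) := by
    simp only [key, Finset.sum_add_distrib]
  have hnull : (∑ α : Fin 4, ∑ β : Fin 4, ∑ γ : Fin 4,
      G α β γ * ω α * ω β * ω γ) = 0 := by
    apply hG
    have e0 : ω 0 = 1 := by simp [hω]
    have e1 : ω 1 = -(p 1 / rad p) := by simp [hω]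
    have e2 : ω 2 = -(p 2 / rad p) := by simp [hω]
    have e3 : ω 3 = -(p 3 / rad p) := by simp [hω]
    rw [e0, e1, e2, e3]
    field_simp
    linarith [hr2]
  have hS4 : (∑ α : Fin 4, ∑ β : Fin 4, ∑ γ : Fin 4,
      G α β γ * ω α * ω β * ω γ * (pd 0 w₁ p * pd 0 (pd 0 w₂) p)) = 0 := by
    simp only [← Finset.sum_mul, hnull, zero_mul]
  -- component bounds
  have hDnn : 0 ≤ Dnorm w₁ p := Real.sqrt_nonneg _
  have hTnn : 0 ≤ Tnorm w₁ p := Real.sqrt_nonneg _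
  have hD2nn : 0 ≤ D2norm w₂ p := Real.sqrt_nonneg _
  have hTDnn : 0 ≤ TDnorm w₂ p := Real.sqrt_nonneg _
  have hDn : ∀ γ, |pd γ w₁ p| ≤ Dnorm w₁ p := by
    intro γ
    rw [Dnorm]
    exact abs_le_sqrt_of_sq_le' (Finset.single_le_sum (f := fun i => pd i w₁ p ^ 2)
      (fun i _ => sq_nonneg _) (Finset.mem_univ γ))
  have hD2 : ∀ α β, |pd α (pd β w₂) p| ≤ D2norm w₂ p := by
    intro α β
    rw [D2norm]
    apply abs_le_sqrt_of_sq_le'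
    calc pd α (pd β w₂) p ^ 2 ≤ ∑ β' : Fin 4, pd α (pd β' w₂) p ^ 2 :=
          Finset.single_le_sum (f := fun i => pd α (pd i w₂) p ^ 2)
            (fun i _ => sq_nonneg _) (Finset.mem_univ β)
      _ ≤ ∑ α' : Fin 4, ∑ β' : Fin 4, pd α' (pd β' w₂) p ^ 2 :=
          Finset.single_le_sum (f := fun i => ∑ β' : Fin 4, pd i (pd β' w₂) p ^ 2)
            (fun i _ => Finset.sum_nonneg fun j _ => sq_nonneg _)
            (Finset.mem_univ α)
  have hTn : ∀ γ, |t γ w₁| ≤ Tnorm w₁ p := by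
    intro γ
    by_cases hγ : γ = 0
    · subst hγ; simpa [htdef] using hTnn
    · have h3 : γ = 1 ∨ γ = 2 ∨ γ = 3 := by
        fin_cases γ
        · exact absurd rfl hγ
        all_goals decide
      simp only [htdef, if_neg hγ]
      rw [Tnorm]
      apply abs_le_sqrt_of_sq_le'
      rcases h3 with h | h | h <;> subst h <;>
        linarith [sq_nonneg (Tgood 1 w₁ p), sq_nonneg (Tgood 2 w₁ p), sq_nonneg (Tgood 3 w₁ p)]
  have hTD : ∀ α β : Fin 4, |t α (pd β w₂)| ≤ TDnorm w₂ p := by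
    intro α β
    by_cases hα : α = 0
    · subst hα; simpa [htdef] using hTDnn
    · have hmem : (Tgood 1 (pd β w₂) p) ^ 2 + (Tgood 2 (pd β w₂) p) ^ 2
          + (Tgood 3 (pd β w₂) p) ^ 2
          ≤ ∑ γ : Fin 4, ((Tgood 1 (pd γ w₂) p) ^ 2 + (Tgood 2 (pd γ w₂) p) ^ 2
              + (Tgood 3 (pd γ w₂) p) ^ 2) :=
        Finset.single_le_sum (f := fun i => (Tgood 1 (pd i w₂) p) ^ 2
            + (Tgood 2 (pd i w₂) p) ^ 2 + (Tgood 3 (pd i w₂) p) ^ 2)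
          (fun i _ => by positivity) (Finset.mem_univ β)
      have h3 : α = 1 ∨ α = 2 ∨ α = 3 := by
        fin_cases α
        · exact absurd rfl hα
        all_goals decide
      simp only [htdef, if_neg hα]
      rw [TDnorm]
      apply abs_le_sqrt_of_sq_le'
      rcases h3 with h | h | h <;> subst h <;>
        linarith [sq_nonneg (Tgood 1 (pd β w₂) p), sq_nonneg (Tgood 2 (pd β w₂) p),
          sq_nonneg (Tgood 3 (pd β w₂) p), hmem]
  have hωb : ∀ γ, |ω γ| ≤ 1 := by
    intro γ
    by_cases hγ : γ = 0
    · subst hγ; simp [hω]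
    · simp only [hω, if_neg hγ, abs_neg, abs_div, abs_of_pos hrpos]
      rw [div_le_one hrpos, ← Real.sqrt_sq_eq_abs]
      have h3 : γ = 1 ∨ γ = 2 ∨ γ = 3 := by
        fin_cases γ
        · exact absurd rfl hγ
        all_goals decide
      show Real.sqrt _ ≤ rad p
      rw [rad]
      apply Real.sqrt_le_sqrt
      rcases h3 with h | h | h <;> subst h <;>
        linarith [sq_nonneg (p 1), sq_nonneg (p 2), sq_nonneg (p 3)]
  -- summation machinery
  have habs3 : ∀ f : Fin 4 → Fin 4 → Fin 4 → ℝ,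
      |∑ α : Fin 4, ∑ β : Fin 4, ∑ γ : Fin 4, f α β γ|
        ≤ ∑ α : Fin 4, ∑ β : Fin 4, ∑ γ : Fin 4, |f α β γ| := by
    intro f
    refine (Finset.abs_sum_le_sum_abs _ _).trans (Finset.sum_le_sum fun α _ => ?_)
    refine (Finset.abs_sum_le_sum_abs _ _).trans (Finset.sum_le_sum fun β _ => ?_)
    exact Finset.abs_sum_le_sum_abs _ _
  have hbound : ∀ (f : Fin 4 → Fin 4 → Fin 4 → ℝ) (c : ℝ),
      (∀ α β γ, |f α β γ| ≤ |G α β γ| * c) →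
      |∑ α : Fin 4, ∑ β : Fin 4, ∑ γ : Fin 4, f α β γ| ≤ K * c := by
    intro f c hf
    refine (habs3 f).trans ?_
    have h := Finset.sum_le_sum (s := (Finset.univ : Finset (Fin 4)))
      (fun α _ => Finset.sum_le_sum (s := (Finset.univ : Finset (Fin 4)))
        (fun β _ => Finset.sum_le_sum (s := (Finset.univ : Finset (Fin 4)))
          (fun γ _ => hf α β γ)))
    refine h.trans (le_of_eq ?_)
    simp only [← Finset.sum_mul, hK]
  have hb1 : ∀ α β γ : Fin 4, |G α β γ * t γ w₁ * pd α (pd β w₂) p|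
      ≤ |G α β γ| * (Tnorm w₁ p * D2norm w₂ p) := by
    intro α β γ
    have h1 : |G α β γ * t γ w₁ * pd α (pd β w₂) p|
        = |G α β γ| * (|t γ w₁| * |pd α (pd β w₂) p|) := by
      rw [abs_mul, abs_mul]; ring
    rw [h1]
    refine mul_le_mul_of_nonneg_left ?_ (abs_nonneg _)
    exact mul_le_mul (hTn γ) (hD2 α β) (abs_nonneg _) hTnn
  have hb2 : ∀ α β γ : Fin 4, |G α β γ * (ω γ * pd 0 w₁ p) * t α (pd β w₂)|
      ≤ |G α β γ| * (Dnorm w₁ p * TDnorm w₂ p) := by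
    intro α β γ
    have h1 : |G α β γ * (ω γ * pd 0 w₁ p) * t α (pd β w₂)|
        = |G α β γ| * (|ω γ| * (|pd 0 w₁ p| * |t α (pd β w₂)|)) := by
      rw [abs_mul, abs_mul, abs_mul]; ring
    rw [h1]
    refine mul_le_mul_of_nonneg_left ?_ (abs_nonneg _)
    calc |ω γ| * (|pd 0 w₁ p| * |t α (pd β w₂)|)
        ≤ 1 * (|pd 0 w₁ p| * |t α (pd β w₂)|) :=
          mul_le_mul_of_nonneg_right (hωb γ)
            (mul_nonneg (abs_nonneg _) (abs_nonneg _))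
      _ = |pd 0 w₁ p| * |t α (pd β w₂)| := one_mul _
      _ ≤ Dnorm w₁ p * TDnorm w₂ p :=
          mul_le_mul (hDn 0) (hTD α β) (abs_nonneg _) hDnn
  have hb3 : ∀ α β γ : Fin 4, |G α β γ * (ω γ * pd 0 w₁ p) * (ω α * t β (pd 0 w₂))|
      ≤ |G α β γ| * (Dnorm w₁ p * TDnorm w₂ p) := by
    intro α β γ
    have h1 : |G α β γ * (ω γ * pd 0 w₁ p) * (ω α * t β (pd 0 w₂))|
        = |G α β γ| * (|ω γ| * (|ω α| * (|pd 0 w₁ p| * |t β (pd 0 w₂)|))) := by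
      rw [abs_mul, abs_mul, abs_mul, abs_mul]; ring
    rw [h1]
    refine mul_le_mul_of_nonneg_left ?_ (abs_nonneg _)
    calc |ω γ| * (|ω α| * (|pd 0 w₁ p| * |t β (pd 0 w₂)|))
        ≤ 1 * (|ω α| * (|pd 0 w₁ p| * |t β (pd 0 w₂)|)) :=
          mul_le_mul_of_nonneg_right (hωb γ) (by positivity)
      _ = |ω α| * (|pd 0 w₁ p| * |t β (pd 0 w₂)|) := one_mul _
      _ ≤ 1 * (|pd 0 w₁ p| * |t β (pd 0 w₂)|) :=
          mul_le_mul_of_nonneg_right (hωb α) (by positivity)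
      _ = |pd 0 w₁ p| * |t β (pd 0 w₂)| := one_mul _
      _ ≤ Dnorm w₁ p * TDnorm w₂ p :=
          mul_le_mul (hDn 0) (hTD β 0) (abs_nonneg _) hDnn
  have e1 := hbound _ _ hb1
  have e2 := hbound _ _ hb2
  have e3 := hbound _ _ hb3
  rw [sum_eq, hS4, add_zero]
  have hsplit := (abs_add_le (((∑ α : Fin 4, ∑ β : Fin 4, ∑ γ : Fin 4,
            G α β γ * t γ w₁ * pd α (pd β w₂) p)
        + (∑ α : Fin 4, ∑ β : Fin 4, ∑ γ : Fin 4,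
            G α β γ * (ω γ * pd 0 w₁ p) * t α (pd β w₂))))
      (∑ α : Fin 4, ∑ β : Fin 4, ∑ γ : Fin 4,
            G α β γ * (ω γ * pd 0 w₁ p) * (ω α * t β (pd 0 w₂)))).trans
    (add_le_add ((abs_add_le _ _).trans (add_le_add e1 e2)) e3)
  refine hsplit.trans ?_
  have hp1 : 0 ≤ Tnorm w₁ p * D2norm w₂ p := mul_nonneg hTnn hD2nn
  have hp2 : 0 ≤ Dnorm w₁ p * TDnorm w₂ p := mul_nonneg hDnn hTDnn
  nlinarith [mul_nonneg hK0 hp1, mul_nonneg hK0 hp2]
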